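/- arXiv:1308.0248 — 3 statements merged into one kernel-verified Lean document; each statement's English description precedes it below -/
import Mathlib

section
/- The function β₂(c) = √π · Γ(2c+1/2)/Γ(c+1/2)² is strictly increasing on (0, ∞). -/
/-!
Taking logarithms, `log β₂(c) = log √π + g(2c + 1/2) - 2 g(c + 1/2)` with `g = log ∘ Γ`. Since `g` is
strictly convex on `(0, ∞)`, its increments over intervals of fixed length strictly increase with
the position of the interval. So for `x < y`, twice the increment of `g` over `[x + 1/2, y + 1/2]`
is less than the sum of its increments over `[2x + 1/2, x + y + 1/2]` and `[x + y + 1/2, 2y + 1/2]`,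
which is the claim.
-/

open Real Set

/-- `log Γ(s) = log Γ(s + 1) - log s`: a convex function plus a strictly convex one. -/
theorem strictConvexOn_log_Gamma : StrictConvexOn ℝ (Ioi 0) (log ∘ Gamma) := by
  have hshift : ConvexOn ℝ (Ioi 0) fun s => log (Gamma (s + 1)) :=
    (convexOn_log_Gamma.translate_left 1).subset
      (fun s (hs : 0 < s) => show (0 : ℝ) < 1 + s by linarith) (convex_Ioi 0)
  refine (hshift.add_strictConvexOn strictConcaveOn_log_Ioi.neg).congr fun s (hs : 0 < s) => ?_
  simp [Gamma_add_one hs.ne', log_mul hs.ne' (Gamma_pos_of_pos hs).ne']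

theorem StrictConvexOn.sub_lt_sub_of_lt {𝕜 : Type*} [Field 𝕜] [LinearOrder 𝕜]
    [IsStrictOrderedRing 𝕜] {s : Set 𝕜} {f : 𝕜 → 𝕜} (hf : StrictConvexOn 𝕜 s f) {p q h : 𝕜}
    (hp : p ∈ s) (hqh : q + h ∈ s) (hpq : p < q) (hh : 0 < h) :
    f (p + h) - f p < f (q + h) - f q := by
  have hslope :=
    (hf.secant_strict_mono_aux2 hp hqh (lt_add_of_pos_right p hh) (by linarith)).trans
      (hf.secant_strict_mono_aux3 hp hqh hpq (lt_add_of_pos_right q hh))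
  rwa [add_sub_cancel_left, add_sub_cancel_left, div_lt_div_iff_of_pos_right hh] at hslope

theorem StrictConvexOn.strictMonoOn_sub_two_mul {g : ℝ → ℝ} (hg : StrictConvexOn ℝ (Ioi 0) g)
    {a : ℝ} (ha : 0 ≤ a) :
    StrictMonoOn (fun c => g (2 * c + a) - 2 * g (c + a)) (Ioi 0) := by
  intro x (hx : 0 < x) y (hy : 0 < y) hxy
  have h₁ : g (x + a + (y - x)) - g (x + a) < g (2 * x + a + (y - x)) - g (2 * x + a) :=
    hg.sub_lt_sub_of_lt (mem_Ioi.2 (by linarith)) (mem_Ioi.2 (by linarith)) (by linarith)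
      (by linarith)
  have h₂ : g (x + a + (y - x)) - g (x + a) < g (x + y + a + (y - x)) - g (x + y + a) :=
    hg.sub_lt_sub_of_lt (mem_Ioi.2 (by linarith)) (mem_Ioi.2 (by linarith)) (by linarith)
      (by linarith)
  ring_nf at h₁ h₂ ⊢
  linarith

/-- `β₂(c) = √π Γ(2c+1/2)/Γ(c+1/2)²` is strictly increasing on `(0, ∞)`. -/
theorem beta2_strictMonoOn :
    StrictMonoOn
      (fun c : ℝ => Real.sqrt Real.pi * Real.Gamma (2 * c + 1 / 2) / Real.Gamma (c + 1 / 2) ^ 2)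
      (Set.Ioi 0) := by
  have hlog := strictConvexOn_log_Gamma.strictMonoOn_sub_two_mul (a := 1 / 2) (by norm_num)
  have hexp : EqOn (fun c => √π * exp (log (Gamma (2 * c + 1 / 2)) - 2 * log (Gamma (c + 1 / 2))))
      (fun c => √π * Gamma (2 * c + 1 / 2) / Gamma (c + 1 / 2) ^ 2) (Ioi 0) :=
    fun c (hc : 0 < c) => by
      dsimp only
      rw [exp_sub, mul_comm (2 : ℝ) (log _), exp_mul, exp_log (Gamma_pos_of_pos (by linarith)),
        exp_log (Gamma_pos_of_pos (by linarith)), rpow_two, mul_div_assoc]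
  exact ((exp_strictMono.const_mul (sqrt_pos.2 pi_pos)).comp_strictMonoOn hlog).congr hexp
end

section
/- For c = 3/5, the value √π · Γ(2c+1/2)/Γ(c+1/2)² is strictly less than 3, and for c = 7/5 it is strictly greater than 3. -/
/-!
`Γ` is log-convex with `Γ(3/2) = √π/2` and `Γ(2) = 1`. Interpolating `log Γ` linearly between
`2` and one of `3/2`, `11/10`, `13/10` bounds `Γ` at `17/10`, `19/10`, `11/10`, `13/10` by powers of
a fifth root `u` of `Γ(3/2)`, so that `u^10 = π/4`. This gives `β₂(3/5) ≤ 8/π < 3` and, with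
`Γ(33/10) = (23/10)(13/10) Γ(13/10)`, `β₂(7/5) ≥ (299/200) π > 3`.
-/

open Real

namespace Real

theorem Gamma_three_halves : Gamma (3 / 2) = √π / 2 := by
  rw [show (3 / 2 : ℝ) = 1 / 2 + 1 by norm_num, Gamma_add_one (by norm_num), Gamma_one_half_eq]
  ring

variable {x y z w : ℝ} {m k : ℕ}

theorem Gamma_weighted_mean_pow_le (hx : 0 < x) (hy : 0 < y) (hm : 0 < m) (hk : 0 < k) :
    Gamma ((m * x + k * y) / (m + k)) ^ (m + k) ≤ Gamma x ^ m * Gamma y ^ k := by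
  have hn : (0 : ℝ) < m + k := by positivity
  have hconv := Gamma_mul_add_mul_le_rpow_Gamma_mul_rpow_Gamma hx hy
    (a := m / (m + k)) (b := k / (m + k)) (by positivity) (by positivity) (by field_simp)
  have hmean : (m / (m + k) * x + k / (m + k) * y : ℝ) = (m * x + k * y) / (m + k) := by
    field_simp
  rw [hmean] at hconv
  calc Gamma ((m * x + k * y) / (m + k)) ^ (m + k)
      ≤ (Gamma x ^ (m / (m + k) : ℝ) * Gamma y ^ (k / (m + k) : ℝ)) ^ (m + k) :=
        pow_le_pow_left₀ (Gamma_pos_of_pos (by positivity)).le hconv _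
    _ = Gamma x ^ m * Gamma y ^ k := by
        rw [mul_pow, ← rpow_natCast, ← rpow_natCast, ← rpow_mul (Gamma_pos_of_pos hx).le,
          ← rpow_mul (Gamma_pos_of_pos hy).le, Nat.cast_add, div_mul_cancel₀ _ hn.ne',
          div_mul_cancel₀ _ hn.ne', rpow_natCast, rpow_natCast]

theorem Gamma_mean_with_two_pow_le (hx : 0 < x) (hm : 0 < m) (hk : 0 < k) :
    Gamma ((m * x + k * 2) / (m + k)) ^ (m + k) ≤ Gamma x ^ m := by
  simpa [Gamma_two] using Gamma_weighted_mean_pow_le hx two_pos hm hk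

theorem Gamma_le_pow_of_mean_with_two (hx : 0 < x) (hm : 0 < m) (hk : 0 < k)
    (hz : (m * x + k * 2) / (m + k) = z) (hw : 0 ≤ w) (hwx : w ^ (m + k) = Gamma x) :
    Gamma z ≤ w ^ m := by
  refine le_of_pow_le_pow_left₀ (n := m + k) (by omega) (by positivity) ?_
  rw [← pow_mul, mul_comm, pow_mul, hwx, ← hz]
  exact Gamma_mean_with_two_pow_le hx hm hk

theorem pow_le_Gamma_of_mean_with_two (hx : 0 < x) (hm : 0 < m) (hk : 0 < k)
    (hz : (m * x + k * 2) / (m + k) = z) (hwz : w ^ m = Gamma z) :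
    w ^ (m + k) ≤ Gamma x := by
  refine le_of_pow_le_pow_left₀ (n := m) hm.ne' (Gamma_pos_of_pos hx).le ?_
  rw [← pow_mul, mul_comm, pow_mul, hwz, ← hz]
  exact Gamma_mean_with_two_pow_le hx hm hk

end Real

theorem exists_pow_five_eq_Gamma_three_halves :
    ∃ u : ℝ, 0 < u ∧ u ^ 5 = Gamma (3 / 2) ∧ u ^ 10 = π / 4 := by
  refine ⟨Gamma (3 / 2) ^ ((5 : ℕ)⁻¹ : ℝ), by positivity,
    rpow_inv_natCast_pow (by positivity) (by norm_num), ?_⟩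
  rw [show 10 = 5 * 2 by rfl, pow_mul, rpow_inv_natCast_pow (by positivity) (by norm_num),
    Gamma_three_halves, div_pow, sq_sqrt pi_pos.le]
  norm_num

theorem sqrt_pi_mul_Gamma_div_Gamma_sq_lt_three :
    √π * Gamma (17 / 10) / Gamma (11 / 10) ^ 2 < 3 := by
  obtain ⟨u, hu, hu5, hu10⟩ := exists_pow_five_eq_Gamma_three_halves
  have h17 : Gamma (17 / 10) ≤ u ^ 3 :=
    Gamma_le_pow_of_mean_with_two (x := 3 / 2) (m := 3) (k := 2) (by norm_num) (by norm_num)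
      (by norm_num) (by norm_num) hu.le hu5
  have h11 : u ^ 9 ≤ Gamma (11 / 10) :=
    pow_le_Gamma_of_mean_with_two (m := 5) (k := 4) (by norm_num) (by norm_num) (by norm_num)
      (by norm_num) hu5
  rw [div_lt_iff₀ (by positivity), show √π = 2 * u ^ 5 by rw [hu5, Gamma_three_halves]; ring]
  calc 2 * u ^ 5 * Gamma (17 / 10) ≤ 2 * u ^ 5 * u ^ 3 := by gcongr
    _ < 3 * (u ^ 9) ^ 2 := by nlinarith [pi_gt_three, pow_pos hu 8]
    _ ≤ 3 * Gamma (11 / 10) ^ 2 := by gcongr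

theorem three_lt_sqrt_pi_mul_Gamma_div_Gamma_sq :
    3 < √π * Gamma (33 / 10) / Gamma (19 / 10) ^ 2 := by
  obtain ⟨u, hu, hu5, hu10⟩ := exists_pow_five_eq_Gamma_three_halves
  have h19 : Gamma (19 / 10) ≤ u := by
    simpa using Gamma_le_pow_of_mean_with_two (x := 3 / 2) (m := 1) (k := 4) (by norm_num)
      (by norm_num) (by norm_num) (by norm_num) hu.le hu5
  have h13 : u ^ 7 ≤ Gamma (13 / 10) :=
    pow_le_Gamma_of_mean_with_two (m := 5) (k := 2) (by norm_num) (by norm_num) (by norm_num)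
      (by norm_num) hu5
  have h33 : Gamma (33 / 10) = 23 / 10 * (13 / 10) * Gamma (13 / 10) := by
    rw [show (33 / 10 : ℝ) = 13 / 10 + 1 + 1 by norm_num, Gamma_add_one (by norm_num),
      Gamma_add_one (by norm_num)]
    ring
  rw [lt_div_iff₀ (by positivity), show √π = 2 * u ^ 5 by rw [hu5, Gamma_three_halves]; ring]
  calc 3 * Gamma (19 / 10) ^ 2 ≤ 3 * u ^ 2 := by gcongr
    _ < 2 * u ^ 5 * (23 / 10 * (13 / 10) * u ^ 7) := by nlinarith [pi_gt_three, pow_pos hu 2]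
    _ ≤ 2 * u ^ 5 * Gamma (33 / 10) := by rw [h33]; gcongr

/-- `β₂(3/5) < 3` and `β₂(7/5) > 3`, where `β₂(c) = √π Γ(2c+1/2)/Γ(c+1/2)²`. -/
theorem beta2_lt_three_and_gt_three :
    Real.sqrt Real.pi * Real.Gamma (2 * (3 / 5) + 1 / 2) / Real.Gamma ((3 / 5) + 1 / 2) ^ 2 < 3 ∧
    3 < Real.sqrt Real.pi * Real.Gamma (2 * (7 / 5) + 1 / 2) / Real.Gamma ((7 / 5) + 1 / 2) ^ 2 := by
  constructor
  · convert sqrt_pi_mul_Gamma_div_Gamma_sq_lt_three using 4 <;> norm_num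
  · convert three_lt_sqrt_pi_mul_Gamma_div_Gamma_sq using 4 <;> norm_num
end

section
/- The function c ↦ log Γ(2c+1/2) − 2 log Γ(c+1/2) is strictly convex on (0,∞). -/
/-!
By Legendre's duplication formula, `log Γ(2c + 1/2) - 2 log Γ(c + 1/2)` differs by an affine
function of `c` from `Δ(c + 1/2)`, where `Δ x = log Γ(x - d) + log Γ(x + d) - 2 log Γ x` with
`d = 1/4`. Gauss's limit formula for `log Γ` gives `Δ x = -∑_{m ≥ 0} δ (x + m)`, where
`δ y = log (y - d) + log (y + d) - 2 log y` is strictly concave: its derivative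
`2d² / (y (y² - d²))` decreases. A pointwise limit of convex functions is convex, so the
strict convexity of the first summand `-δ x` survives in `Δ`.
-/

open Real Set Filter Topology

theorem ConvexOn.sum {𝕜 E β ι : Type*} [Semiring 𝕜] [PartialOrder 𝕜] [AddCommMonoid E]
    [AddCommMonoid β] [PartialOrder β] [IsOrderedAddMonoid β] [SMul 𝕜 E] [Module 𝕜 β]
    {s : Set E} {t : Finset ι} {f : ι → E → β} (hs : Convex 𝕜 s)
    (hf : ∀ i ∈ t, ConvexOn 𝕜 s (f i)) : ConvexOn 𝕜 s (∑ i ∈ t, f i) :=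
  Finset.sum_induction _ (ConvexOn 𝕜 s) (fun _ _ => ConvexOn.add) (convexOn_const (0 : β) hs) hf

theorem ConvexOn.of_tendsto {ι E : Type*} [AddCommGroup E] [Module ℝ E] {l : Filter ι} [l.NeBot]
    {s : Set E} {f : ι → E → ℝ} {g : E → ℝ} (hf : ∀ᶠ i in l, ConvexOn ℝ s (f i))
    (hlim : ∀ x ∈ s, Tendsto (fun i => f i x) l (𝓝 (g x))) : ConvexOn ℝ s g := by
  have hs : Convex ℝ s := hf.exists.choose_spec.1
  refine ⟨hs, fun x hx y hy a b ha hb hab => ?_⟩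
  exact le_of_tendsto_of_tendsto (hlim _ (hs hx hy ha hb hab))
    (((hlim x hx).const_mul a).add ((hlim y hy).const_mul b))
    (hf.mono fun i hi => hi.2 hx hy ha hb hab)

theorem StrictConvexOn.of_tendsto_sum {E : Type*} [AddCommGroup E] [Module ℝ E] {s : Set E}
    {u : ℕ → E → ℝ} {g : E → ℝ} (h0 : StrictConvexOn ℝ s (u 0))
    (hu : ∀ m, ConvexOn ℝ s (u (m + 1)))
    (hlim : ∀ x ∈ s, Tendsto (fun n => ∑ m ∈ Finset.range n, u m x) atTop (𝓝 (g x))) :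
    StrictConvexOn ℝ s g := by
  have htail : ConvexOn ℝ s (g - u 0) := by
    refine ConvexOn.of_tendsto (l := atTop) (f := fun n => ∑ m ∈ Finset.range n, u (m + 1))
      (Eventually.of_forall fun n => ConvexOn.sum h0.1 fun m _ => hu m) fun x hx => ?_
    have := ((tendsto_add_atTop_iff_nat 1).2 (hlim x hx)).sub_const (u 0 x)
    simpa [Finset.sum_range_succ'] using this
  simpa using h0.add_convexOn htail

noncomputable def centralDiff2 (d : ℝ) (f : ℝ → ℝ) (x : ℝ) : ℝ :=
  f (x - d) + f (x + d) - 2 * f x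

theorem hasDerivAt_centralDiff2_log {d x : ℝ} (hd : 0 < d) (hx : d < x) :
    HasDerivAt (centralDiff2 d log) (2 * d ^ 2 / (x * (x ^ 2 - d ^ 2))) x := by
  have h1 : x - d ≠ 0 := by linarith
  have h2 : x + d ≠ 0 := by linarith
  have h3 : x ≠ 0 := by linarith
  have h4 : x ^ 2 - d ^ 2 ≠ 0 := by nlinarith
  have : HasDerivAt (centralDiff2 d log) (1 / (x - d) + 1 / (x + d) - 2 * (1 / x)) x :=
    ((((hasDerivAt_id x).sub_const d).log h1).add (((hasDerivAt_id x).add_const d).log h2)).sub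
      (((hasDerivAt_id x).log h3).const_mul 2)
  convert this using 1
  field_simp
  ring

theorem strictConcaveOn_centralDiff2_log {d : ℝ} (hd : 0 < d) :
    StrictConcaveOn ℝ (Ioi d) (centralDiff2 d log) := by
  have hderiv (x : ℝ) (hx : x ∈ Ioi d) := hasDerivAt_centralDiff2_log hd hx
  refine StrictAntiOn.strictConcaveOn_of_deriv (convex_Ioi d)
    (fun x hx => (hderiv x hx).continuousAt.continuousWithinAt) ?_
  rw [interior_Ioi]
  intro x (hx : d < x) y (hy : d < y) hxy
  rw [(hderiv x hx).deriv, (hderiv y hy).deriv]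
  have hden : 0 < x * (x ^ 2 - d ^ 2) := mul_pos (by linarith) (by nlinarith)
  have hdx : d ^ 2 < x ^ 2 := by nlinarith
  have hgrowth : 0 < (y - x) * (x * y + (x ^ 2 - d ^ 2)) :=
    mul_pos (sub_pos.2 hxy) (add_pos (by nlinarith) (sub_pos.2 hdx))
  exact div_lt_div_of_pos_left (by positivity) hden (by nlinarith)

theorem tendsto_sum_centralDiff2_log {d x : ℝ} (h₁ : 0 < x - d) (h₂ : 0 < x + d) :
    Tendsto (fun n : ℕ => ∑ m ∈ Finset.range n, centralDiff2 d log (x + m)) atTop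
      (𝓝 (-centralDiff2 d (log ∘ Gamma) x)) := by
  have hx : 0 < x := by linarith
  have hseq := (((BohrMollerup.tendsto_log_gamma h₁).add
    (BohrMollerup.tendsto_log_gamma h₂)).sub
      ((BohrMollerup.tendsto_log_gamma hx).const_mul 2)).neg
  refine (tendsto_add_atTop_iff_nat 1).1 (hseq.congr fun n => ?_)
  have hterm (m : ℕ) : centralDiff2 d log (x + m) =
      log (x - d + m) + log (x + d + m) - 2 * log (x + m) := by
    unfold centralDiff2; ring_nf
  simp only [BohrMollerup.logGammaSeq, hterm, Finset.sum_add_distrib, Finset.sum_sub_distrib,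
    ← Finset.mul_sum]
  ring

theorem strictConvexOn_centralDiff2_log_Gamma {d : ℝ} (hd : 0 < d) :
    StrictConvexOn ℝ (Ioi d) (centralDiff2 d (log ∘ Gamma)) := by
  have hterm (m : ℕ) : StrictConvexOn ℝ (Ioi d) fun x => -centralDiff2 d log (x + m) :=
    ((strictConcaveOn_centralDiff2_log hd).neg.translate_left (m : ℝ)).subset
      (fun x (hx : d < x) => show d < m + x by linarith [m.cast_nonneg (α := ℝ)]) (convex_Ioi d)
  refine StrictConvexOn.of_tendsto_sum (u := fun m x => -centralDiff2 d log (x + m))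
    (hterm 0) (fun m => (hterm (m + 1)).convexOn)
    fun x (hx : d < x) => ?_
  simpa using (tendsto_sum_centralDiff2_log (by linarith) (by linarith) : Tendsto _ _ _).neg

theorem log_Gamma_two_mul {s : ℝ} (hs : 0 < s) :
    log (Gamma (2 * s)) =
      log (Gamma s) + log (Gamma (s + 1 / 2)) + (2 * s - 1) * log 2 - log √π := by
  rw [← log_mul (Gamma_pos_of_pos hs).ne' (Gamma_pos_of_pos (by linarith)).ne',
    Gamma_mul_Gamma_add_half,
    log_mul (by positivity) (by positivity), log_mul (Gamma_pos_of_pos (by linarith)).ne'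
    (by positivity), log_rpow two_pos]
  ring

/-- The function `c ↦ log Γ(2c+1/2) − 2 log Γ(c+1/2)` is strictly convex on `(0,∞)`. -/
theorem logBeta2_strictConvexOn :
    StrictConvexOn ℝ (Set.Ioi (0 : ℝ))
      (fun c : ℝ => Real.log (Real.Gamma (2 * c + 1 / 2)) -
        2 * Real.log (Real.Gamma (c + 1 / 2))) := by
  have hshift :
      StrictConvexOn ℝ (Ioi 0) fun c => centralDiff2 (1 / 4) (log ∘ Gamma) (c + 1 / 2) :=
    ((strictConvexOn_centralDiff2_log_Gamma (by norm_num)).translate_left (1 / 2)).subset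
      (fun c (hc : 0 < c) => show 1 / 4 < 1 / 2 + c by linarith) (convex_Ioi 0)
  have haffine :
      ConvexOn ℝ (Ioi 0) fun c : ℝ => (2 * log 2) • c + (-(log 2 / 2) - log √π) :=
    ((convexOn_id (convex_Ioi 0)).smul (by positivity)).add_const _
  refine (hshift.add_convexOn haffine).congr fun c (hc : 0 < c) => ?_
  have hdup := log_Gamma_two_mul (s := c + 1 / 4) (by positivity)
  rw [show 2 * (c + 1 / 4) = 2 * c + 1 / 2 by ring, show c + 1 / 4 + 1 / 2 = c + 3 / 4 by ring]
    at hdup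
  simp only [centralDiff2, Pi.add_apply, Function.comp_apply, smul_eq_mul, hdup]
  ring_nf
end
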